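/- For each fixed 0 < t ≤ 1, one has Σ_{j=1}^{b_t(n)} x_{n,α}^j ∼ t·n and Σ_{j=1}^{b_t(n)} x_{n,α}^j / j ∼ t·n/α(n) as n → ∞ (i.e. the ratios converge to 1). -/

import Mathlib

open Finset Filter

noncomputable section

/-- `b_t(n) = max{α(n) + ⌊log t · α(n)/log(n/α(n))⌋, 0}` for `t > 0`. -/
def bt (α : ℕ → ℕ) (n : ℕ) (t : ℝ) : ℕ :=
  if t = 0 then 0
  else ((α n : ℤ) + ⌊Real.log t * (α n : ℝ) / Real.log ((n : ℝ) / (α n : ℝ))⌋).toNat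

/-!
Write `N = ∑_{j ≤ a} x^j` and `L = log (N / a)`. From `N / a ≤ x^a ≤ N` and
`x^(a+1) - x = (x - 1) N` one gets `L ≤ a log x ≤ L + log (1 + a log x)`, so `a log x ~ L → ∞`
and `log x → 0`. Since `a - b_t ≈ -log t · a / L`, this gives `(a - b_t) log x → -log t`, i.e.
`x^(b_t) / x^a → t`, and the closed form `∑_{j ≤ b} x^j / N = (x^b - 1) / (x^a - 1)` gives the
first limit.

For the second, `∑_{j ≤ b} x^j / j ≥ (1 / a) ∑_{j ≤ b} x^j` is the lower bound. For the upper
bound split the sum at `m ≈ 1 / log x` and at `M = b - d` with `x^d ≥ (a log x)²`: the terms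
below `m` contribute `O(log N)`, those between `m` and `M` at most `N / (a · a log x)`, and the
remaining ones at most `(1 / M) ∑_{j ≤ b} x^j` with `M ~ a`.
-/

open Real Topology

lemma exp_natCast_mul_log {x : ℝ} (hx : 0 < x) (n : ℕ) : exp (n * log x) = x ^ n := by
  rw [Real.exp_nat_mul, Real.exp_log hx]

lemma sum_Icc_pow_eq {x : ℝ} (hx : x ≠ 1) (c : ℕ) :
    ∑ j ∈ Icc 1 c, x ^ j = x * (x ^ c - 1) / (x - 1) := by
  rw [← Finset.Ico_add_one_right_eq_Icc, geom_sum_Ico hx (by omega)]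
  ring

lemma sum_Icc_pow_div_sum_Icc_pow {x : ℝ} (hx : 1 < x) (b a : ℕ) :
    (∑ j ∈ Icc 1 b, x ^ j) / ∑ j ∈ Icc 1 a, x ^ j = (x ^ b - 1) / (x ^ a - 1) := by
  have hx0 : x ≠ 0 := by positivity
  have hx1 : x - 1 ≠ 0 := by linarith
  rw [sum_Icc_pow_eq hx.ne', sum_Icc_pow_eq hx.ne', div_div_div_cancel_right₀ hx1,
    mul_div_mul_left _ _ hx0]

lemma natCast_le_sum_Icc_pow {x : ℝ} (hx : 1 ≤ x) (a : ℕ) : (a : ℝ) ≤ ∑ j ∈ Icc 1 a, x ^ j := by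
  calc (a : ℝ) = ∑ _j ∈ Icc 1 a, (1 : ℝ) := by simp
    _ ≤ ∑ j ∈ Icc 1 a, x ^ j := sum_le_sum fun j _ => one_le_pow₀ hx

lemma pow_le_sum_Icc_pow {x : ℝ} (hx : 0 ≤ x) {a : ℕ} (ha : 1 ≤ a) :
    x ^ a ≤ ∑ j ∈ Icc 1 a, x ^ j :=
  single_le_sum (f := (x ^ ·)) (fun j _ => by positivity) (mem_Icc.mpr ⟨ha, le_rfl⟩)

lemma sum_Icc_pow_le {x : ℝ} (hx : 1 ≤ x) (a : ℕ) : ∑ j ∈ Icc 1 a, x ^ j ≤ a * x ^ a := by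
  calc ∑ j ∈ Icc 1 a, x ^ j ≤ ∑ _j ∈ Icc 1 a, x ^ a :=
        sum_le_sum fun j hj => pow_le_pow_right₀ hx (mem_Icc.mp hj).2
    _ = a * x ^ a := by simp

lemma one_lt_of_log_sum_Icc_pow_div_pos {x : ℝ} (hx : 0 ≤ x) {a : ℕ}
    (h : 0 < log ((∑ j ∈ Icc 1 a, x ^ j) / a)) : 1 < x := by
  by_contra! hx1
  have hsum : ∑ j ∈ Icc 1 a, x ^ j ≤ a := by
    calc ∑ j ∈ Icc 1 a, x ^ j ≤ ∑ _j ∈ Icc 1 a, (1 : ℝ) :=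
          sum_le_sum fun j _ => pow_le_one₀ hx hx1
      _ = a := by simp
  have : (∑ j ∈ Icc 1 a, x ^ j) / a ≤ 1 := div_le_one_of_le₀ hsum (Nat.cast_nonneg a)
  exact h.not_ge (log_nonpos (by positivity) this)

lemma log_sum_Icc_pow_div_le {x : ℝ} (hx : 1 ≤ x) {a : ℕ} (ha : 1 ≤ a) :
    log ((∑ j ∈ Icc 1 a, x ^ j) / a) ≤ a * log x := by
  have ha0 : (0 : ℝ) < a := by exact_mod_cast ha
  rw [← log_pow]
  refine log_le_log (div_pos (by linarith [natCast_le_sum_Icc_pow hx a]) ha0) ?_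
  rw [div_le_iff₀ ha0, mul_comm]
  exact sum_Icc_pow_le hx a

lemma mul_log_le_log_sum_Icc_pow {x : ℝ} (hx : 0 < x) {a : ℕ} (ha : 1 ≤ a) :
    a * log x ≤ log (∑ j ∈ Icc 1 a, x ^ j) := by
  rw [← log_pow]
  exact log_le_log (by positivity) (pow_le_sum_Icc_pow hx.le ha)

/- From `x^(a+1) - x = (x - 1) N` and `x - 1 ≤ x log x`:
`x^a ≤ N log x + 1 ≤ (N / a) (1 + a log x)`. -/
lemma mul_log_le_log_sum_Icc_pow_div_add {x : ℝ} (hx : 1 < x) {a : ℕ} (ha : 1 ≤ a) :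
    a * log x ≤ log ((∑ j ∈ Icc 1 a, x ^ j) / a) + log (1 + a * log x) := by
  set N := ∑ j ∈ Icc 1 a, x ^ j
  have ha0 : (0 : ℝ) < a := by exact_mod_cast ha
  have hx0 : 0 < x := by linarith
  have hlog : 0 < log x := log_pos hx
  have hNa : 1 ≤ N / a := (one_le_div ha0).mpr (natCast_le_sum_Icc_pow hx.le a)
  have hgeom : x * x ^ a = (x - 1) * N + x := by
    simp only [N, sum_Icc_pow_eq hx.ne']; field_simp [show x - 1 ≠ 0 by linarith]; ring
  have hsub : x - 1 ≤ x * log x := by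
    calc x - 1 = x * (1 - x⁻¹) := by field_simp
      _ ≤ x * log x := by gcongr; exact one_sub_inv_le_log_of_pos hx0
  have hpow : x ^ a ≤ N / a * (1 + a * log x) := by
    have h1 : x * x ^ a ≤ x * (N * log x + 1) := by
      rw [hgeom]
      nlinarith [mul_le_mul_of_nonneg_right hsub (by positivity : 0 ≤ N)]
    calc x ^ a ≤ N * log x + 1 := le_of_mul_le_mul_left h1 hx0
      _ = N / a * (a * log x) + 1 := by field_simp
      _ ≤ N / a * (a * log x) + N / a := by linarith
      _ = N / a * (1 + a * log x) := by ring
  calc a * log x = log (x ^ a) := (log_pow x a).symm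
    _ ≤ log (N / a * (1 + a * log x)) := log_le_log (by positivity) hpow
    _ = log (N / a) + log (1 + a * log x) := log_mul (by positivity) (by positivity)

lemma sum_Ioc_pow_div_le_mul_one_add_log {x : ℝ} (hx : 1 ≤ x) (m : ℕ) :
    ∑ j ∈ Ioc 0 m, x ^ j / j ≤ x ^ m * (1 + log m) := by
  calc ∑ j ∈ Ioc 0 m, x ^ j / j ≤ ∑ j ∈ Ioc 0 m, x ^ m * (j : ℝ)⁻¹ :=
        sum_le_sum fun j hj => by
          rw [div_eq_mul_inv]
          gcongr
          exact (mem_Ioc.mp hj).2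
    _ = x ^ m * harmonic m := by
        rw [← mul_sum, harmonic_eq_sum_Icc, ← Finset.Icc_add_one_left_eq_Ioc]
        push_cast
        rfl
    _ ≤ x ^ m * (1 + log m) := by gcongr; exact harmonic_le_one_add_log m

lemma sum_Ioc_pow_div_le_sum_Icc_pow_div {x : ℝ} (hx : 0 ≤ x) {m M : ℕ} (hm : 0 < m) :
    ∑ j ∈ Ioc m M, x ^ j / j ≤ (∑ j ∈ Icc 1 M, x ^ j) / m := by
  rw [sum_div]
  calc ∑ j ∈ Ioc m M, x ^ j / j ≤ ∑ j ∈ Ioc m M, x ^ j / m :=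
        sum_le_sum fun j hj => by
          gcongr
          exact_mod_cast (mem_Ioc.mp hj).1.le
    _ ≤ ∑ j ∈ Icc 1 M, x ^ j / m :=
        sum_le_sum_of_subset_of_nonneg
          (fun j hj => mem_Icc.mpr ⟨by grind, (mem_Ioc.mp hj).2⟩)
          (fun _ _ _ => by positivity)

lemma sum_Icc_pow_div_le {x : ℝ} (hx : 1 ≤ x) {m M N : ℕ} (hm : 0 < m) (hmM : m ≤ M)
    (hMN : M ≤ N) :
    ∑ j ∈ Icc 1 N, x ^ j / j ≤
      x ^ m * (1 + log N) + (∑ j ∈ Icc 1 M, x ^ j) / m + (∑ j ∈ Icc 1 N, x ^ j) / M := by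
  have hIcc : Icc 1 N = Ioc 0 N := Finset.Icc_add_one_left_eq_Ioc 0 N
  rw [hIcc, ← sum_Ioc_consecutive _ (Nat.zero_le M) hMN,
    ← sum_Ioc_consecutive _ (Nat.zero_le m) hmM, ← hIcc]
  gcongr ?_ + ?_ + ?_
  · calc ∑ j ∈ Ioc 0 m, x ^ j / j ≤ x ^ m * (1 + log m) := sum_Ioc_pow_div_le_mul_one_add_log hx m
      _ ≤ x ^ m * (1 + log N) := by
          gcongr
          exact hmM.trans hMN
  · exact sum_Ioc_pow_div_le_sum_Icc_pow_div (by linarith) hm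
  · exact sum_Ioc_pow_div_le_sum_Icc_pow_div (by linarith) (hm.trans_le hmM)

lemma sum_Icc_pow_div_sum_Icc_pow_le {x : ℝ} (hx : 1 < x) {M a : ℕ} (h : M ≤ a) :
    (∑ j ∈ Icc 1 M, x ^ j) / ∑ j ∈ Icc 1 a, x ^ j ≤ (x ^ (a - M))⁻¹ := by
  have hxa : x ^ a = x ^ M * x ^ (a - M) := by rw [← pow_add, Nat.add_sub_cancel' h]
  have hxM : 1 ≤ x ^ M := one_le_pow₀ hx.le
  have hxaM : 1 ≤ x ^ (a - M) := one_le_pow₀ hx.le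
  rw [sum_Icc_pow_div_sum_Icc_pow hx]
  rcases (sub_nonneg.mpr (one_le_pow₀ hx.le : 1 ≤ x ^ a)).eq_or_lt with h0 | h0
  · rw [← h0, div_zero]; positivity
  · rw [div_le_iff₀ h0, hxa]
    have : x ^ M * x ^ (a - M) * (x ^ (a - M))⁻¹ = x ^ M := by field_simp
    nlinarith [inv_le_one_of_one_le₀ hxaM]

/- With `m ≈ 1/log x` the first block stays below `exp 2 · harmonic`, and with
`x^d ≥ (a log x)²` the middle block is at most `1/(a log x)` of the total. -/
lemma sum_Icc_pow_div_mul_div_le {x : ℝ} {a b m d : ℕ} (hx : 1 < x) (hm : 1 ≤ m * log x)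
    (hm2 : m * log x ≤ 2) (hd : 2 * log (a * log x) ≤ d * log x) (hmd : m ≤ b - d)
    (hdb : d ≤ b) (hba : b ≤ a) :
    (∑ j ∈ Icc 1 b, x ^ j / j) * a / ∑ j ∈ Icc 1 a, x ^ j ≤
      exp 2 * (a * (1 + log (∑ j ∈ Icc 1 a, x ^ j)) / ∑ j ∈ Icc 1 a, x ^ j) +
        (a * log x)⁻¹ + a / (b - d : ℕ) * ((∑ j ∈ Icc 1 b, x ^ j) / ∑ j ∈ Icc 1 a, x ^ j) := by
  set S := ∑ j ∈ Icc 1 a, x ^ j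
  set u := a * log x
  have hx0 : 0 < x := by linarith
  have hℓ : 0 < log x := log_pos hx
  have hm0 : 0 < m := by
    rcases Nat.eq_zero_or_pos m with h | h
    · simp [h] at hm; linarith
    · exact h
  have hb0 : 0 < b := by omega
  have ha0 : (0 : ℝ) < a := by exact_mod_cast (by omega : 0 < a)
  have haS : (a : ℝ) ≤ S := natCast_le_sum_Icc_pow hx.le a
  have hS : 0 < S := ha0.trans_le haS
  have hu : 0 < u := by positivity
  have hsplit := sum_Icc_pow_div_le hx.le hm0 hmd (Nat.sub_le b d)
  have hfirst : x ^ m * (1 + log b) ≤ exp 2 * (1 + log S) := by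
    have hxm : x ^ m ≤ exp 2 := by
      rw [← exp_natCast_mul_log hx0]
      exact exp_le_exp.mpr hm2
    have hb1 : (1 : ℝ) ≤ b := by exact_mod_cast hb0
    have hlog : log b ≤ log S := log_le_log (by positivity) ((Nat.cast_le.mpr hba).trans haS)
    exact mul_le_mul hxm (by linarith) (by linarith [log_nonneg hb1]) (exp_pos 2).le
  have hmiddle : (∑ j ∈ Icc 1 (b - d), x ^ j) / m * a / S ≤ u⁻¹ := by
    have hau : a / (m : ℝ) ≤ u := by
      rw [div_le_iff₀ (by exact_mod_cast hm0)]
      nlinarith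
    have hxd : u ^ 2 ≤ x ^ (a - (b - d)) := by
      calc u ^ 2 = exp (2 * log u) := by simpa using (exp_natCast_mul_log hu 2).symm
        _ ≤ exp (d * log x) := exp_le_exp.mpr hd
        _ = x ^ d := exp_natCast_mul_log hx0 d
        _ ≤ x ^ (a - (b - d)) := pow_le_pow_right₀ hx.le (by omega)
    have hratio := sum_Icc_pow_div_sum_Icc_pow_le hx (show b - d ≤ a by omega)
    calc (∑ j ∈ Icc 1 (b - d), x ^ j) / m * a / S
        = a / m * ((∑ j ∈ Icc 1 (b - d), x ^ j) / S) := by ring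
      _ ≤ u * (u ^ 2)⁻¹ := by gcongr; exact hratio.trans (inv_anti₀ (by positivity) hxd)
      _ = u⁻¹ := by field_simp
  calc (∑ j ∈ Icc 1 b, x ^ j / j) * a / S
      ≤ (x ^ m * (1 + log b) + (∑ j ∈ Icc 1 (b - d), x ^ j) / m +
          (∑ j ∈ Icc 1 b, x ^ j) / (b - d : ℕ)) * a / S := by gcongr
    _ = x ^ m * (1 + log b) * a / S + (∑ j ∈ Icc 1 (b - d), x ^ j) / m * a / S +
          a / (b - d : ℕ) * ((∑ j ∈ Icc 1 b, x ^ j) / S) := by ring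
    _ ≤ exp 2 * (1 + log S) * a / S + u⁻¹ +
          a / (b - d : ℕ) * ((∑ j ∈ Icc 1 b, x ^ j) / S) := by gcongr
    _ = _ := by ring

lemma tendsto_sum_Icc_pow_div {x N : ℕ → ℝ} {a b : ℕ → ℕ} {c : ℝ}
    (hN : ∀ n, N n = ∑ j ∈ Icc 1 (a n), x n ^ j) (hx : ∀ᶠ n in atTop, 1 < x n)
    (hu : Tendsto (fun n => a n * log (x n)) atTop atTop)
    (hk : Tendsto (fun n => ((a n : ℝ) - b n) * log (x n)) atTop (𝓝 c)) :
    Tendsto (fun n => (∑ j ∈ Icc 1 (b n), x n ^ j) / N n) atTop (𝓝 (exp (-c))) := by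
  have hinv : Tendsto (fun n => (x n ^ a n)⁻¹) atTop (𝓝 0) := by
    refine tendsto_inv_atTop_zero.comp ((tendsto_exp_atTop.comp hu).congr' ?_)
    filter_upwards [hx] with n hxn
    exact exp_natCast_mul_log (by linarith) _
  have hq : Tendsto (fun n => x n ^ b n / x n ^ a n) atTop (𝓝 (exp (-c))) := by
    refine ((continuous_exp.tendsto _).comp hk.neg).congr' ?_
    filter_upwards [hx] with n hxn
    have hx0 : 0 < x n := by linarith
    simp only [Function.comp_apply, ← exp_natCast_mul_log hx0, ← exp_sub]
    ring_nf
  have hlim := (hq.sub hinv).div (tendsto_const_nhds (x := (1 : ℝ)).sub hinv) (by norm_num)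
  rw [sub_zero, sub_zero, div_one] at hlim
  refine hlim.congr' ?_
  filter_upwards [hx, hu.eventually_gt_atTop 0] with n hxn hun
  have ha : a n ≠ 0 := by rintro h; simp [h] at hun
  have : x n ^ a n - 1 ≠ 0 := (sub_pos.mpr (one_lt_pow₀ hxn ha)).ne'
  have : x n ^ a n ≠ 0 := by positivity
  simp only [Pi.div_apply]
  rw [hN, sum_Icc_pow_div_sum_Icc_pow hxn]
  field_simp

lemma sum_Icc_pow_le_sum_Icc_pow_div_mul {x : ℝ} (hx : 0 ≤ x) {a b : ℕ} (hba : b ≤ a) :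
    ∑ j ∈ Icc 1 b, x ^ j ≤ (∑ j ∈ Icc 1 b, x ^ j / j) * a := by
  rw [sum_mul]
  refine sum_le_sum fun j hj => ?_
  obtain ⟨hj1, hjb⟩ := mem_Icc.mp hj
  have hj0 : (0 : ℝ) < j := by exact_mod_cast hj1
  rw [div_mul_eq_mul_div, le_div_iff₀ hj0]
  gcongr
  exact_mod_cast hjb.trans hba

lemma tendsto_natCeil_div_div_natCast {a : ℕ → ℕ} {ℓ w : ℕ → ℝ}
    (ha : Tendsto (fun n => (a n : ℝ)) atTop atTop) (hℓ : ∀ᶠ n in atTop, 0 < ℓ n)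
    (hw0 : ∀ᶠ n in atTop, 0 ≤ w n) (hw : Tendsto (fun n => w n / (a n * ℓ n)) atTop (𝓝 0)) :
    Tendsto (fun n => (⌈w n / ℓ n⌉₊ : ℝ) / a n) atTop (𝓝 0) := by
  have hup := hw.add (tendsto_inv_atTop_zero.comp ha)
  rw [add_zero] at hup
  refine tendsto_of_tendsto_of_tendsto_of_le_of_le' tendsto_const_nhds hup
    (Eventually.of_forall fun n => by positivity) ?_
  filter_upwards [hℓ, hw0, ha.eventually_gt_atTop 0] with n hℓn hwn han
  calc (⌈w n / ℓ n⌉₊ : ℝ) / a n ≤ (w n / ℓ n + 1) / a n := by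
        gcongr; exact (Nat.ceil_lt_add_one (by positivity)).le
    _ = w n / (a n * ℓ n) + (a n : ℝ)⁻¹ := by field_simp

lemma eventually_le_of_tendsto_div {f g : ℕ → ℕ} {a : ℕ → ℝ} (ha : ∀ᶠ n in atTop, 0 < a n)
    (hf : Tendsto (fun n => (f n : ℝ) / a n) atTop (𝓝 0))
    (hg : Tendsto (fun n => (g n : ℝ) / a n) atTop (𝓝 1)) : ∀ᶠ n in atTop, f n ≤ g n := by
  filter_upwards [hf.eventually (gt_mem_nhds one_half_pos),
    hg.eventually (lt_mem_nhds one_half_lt_one), ha] with n h1 h2 han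
  exact_mod_cast (div_le_div_iff_of_pos_right han).mp (h1.trans h2).le

lemma natCeil_one_div_mul_bounds {ℓ : ℝ} (hℓ : 0 < ℓ) (hℓ1 : ℓ ≤ 1) :
    1 ≤ ⌈1 / ℓ⌉₊ * ℓ ∧ ⌈1 / ℓ⌉₊ * ℓ ≤ 2 := by
  constructor
  · rw [← div_le_iff₀ hℓ]
    exact Nat.le_ceil _
  · have h := mul_lt_mul_of_pos_right (Nat.ceil_lt_add_one (one_div_pos.mpr hℓ).le) hℓ
    rw [add_mul, one_div_mul_cancel hℓ.ne'] at h
    linarith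

lemma tendsto_sum_Icc_pow_div_mul_div {x N : ℕ → ℝ} {a b : ℕ → ℕ} {r : ℝ}
    (hN : ∀ n, N n = ∑ j ∈ Icc 1 (a n), x n ^ j) (hx : ∀ᶠ n in atTop, 1 < x n)
    (hba : ∀ᶠ n in atTop, b n ≤ a n)
    (hr : Tendsto (fun n => (∑ j ∈ Icc 1 (b n), x n ^ j) / N n) atTop (𝓝 r))
    (hb : Tendsto (fun n => (b n : ℝ) / a n) atTop (𝓝 1))
    (ha : Tendsto (fun n => (a n : ℝ)) atTop atTop)
    (hu : Tendsto (fun n => a n * log (x n)) atTop atTop)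
    (hℓ : Tendsto (fun n => log (x n)) atTop (𝓝 0))
    (hN' : Tendsto (fun n => a n * (1 + log (N n)) / N n) atTop (𝓝 0)) :
    Tendsto (fun n => (∑ j ∈ Icc 1 (b n), x n ^ j / j) * a n / N n) atTop (𝓝 r) := by
  set m := fun n => ⌈1 / log (x n)⌉₊
  set d := fun n => ⌈2 * log (a n * log (x n)) / log (x n)⌉₊
  have hℓ0 : ∀ᶠ n in atTop, 0 < log (x n) := hx.mono fun n hxn => log_pos hxn
  have hm : Tendsto (fun n => (m n : ℝ) / a n) atTop (𝓝 0) :=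
    tendsto_natCeil_div_div_natCast ha hℓ0 (Eventually.of_forall fun _ => zero_le_one)
      (by simpa only [one_div, Function.comp_def] using tendsto_inv_atTop_zero.comp hu)
  have hd : Tendsto (fun n => (d n : ℝ) / a n) atTop (𝓝 0) := by
    refine tendsto_natCeil_div_div_natCast ha hℓ0 ?_ ?_
    · filter_upwards [hu.eventually_ge_atTop 1] with n hn
      exact mul_nonneg zero_le_two (log_nonneg hn)
    · have := (Real.isLittleO_log_id_atTop.tendsto_div_nhds_zero.comp hu).const_mul 2
      rw [mul_zero] at this
      exact this.congr fun n => by simp only [Function.comp_apply, id]; ring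
  have hdb := eventually_le_of_tendsto_div (ha.eventually_gt_atTop 0) hd hb
  have hM : Tendsto (fun n => ((b n - d n : ℕ) : ℝ) / a n) atTop (𝓝 1) := by
    have := hb.sub hd
    rw [sub_zero] at this
    refine this.congr' ?_
    filter_upwards [hdb] with n hn
    rw [Nat.cast_sub hn, sub_div]
  have hmM := eventually_le_of_tendsto_div (ha.eventually_gt_atTop 0) hm hM
  have hupper := ((hN'.const_mul (exp 2)).add (tendsto_inv_atTop_zero.comp hu)).add
    ((by simpa using hM.inv₀ one_ne_zero :
      Tendsto (fun n => (a n : ℝ) / (b n - d n : ℕ)) atTop (𝓝 1)).mul hr)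
  rw [mul_zero, add_zero, zero_add, one_mul] at hupper
  refine tendsto_of_tendsto_of_tendsto_of_le_of_le' hr hupper ?_ ?_
  · filter_upwards [hx, hba] with n hxn hban
    rw [hN]
    gcongr
    exact sum_Icc_pow_le_sum_Icc_pow_div_mul (by linarith) hban
  · filter_upwards [hx, hba, hℓ.eventually (ge_mem_nhds one_pos), hdb, hmM]
      with n hxn hban hℓn hdbn hmMn
    obtain ⟨hm₁, hm₂⟩ := natCeil_one_div_mul_bounds (log_pos hxn) hℓn
    have hd₁ := Nat.le_ceil (2 * log (a n * log (x n)) / log (x n))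
    rw [div_le_iff₀ (log_pos hxn)] at hd₁
    rw [hN]
    exact sum_Icc_pow_div_mul_div_le hxn hm₁ hm₂ hd₁ hmMn hdbn hban

lemma tendsto_log_one_add_div_atTop : Tendsto (fun v => log (1 + v) / v) atTop (𝓝 0) := by
  have h := ((tendsto_log_comp_add_sub_log 1).div_atTop tendsto_id).add
    Real.isLittleO_log_id_atTop.tendsto_div_nhds_zero
  rw [add_zero] at h
  exact h.congr fun v => by simp only [id]; ring_nf

lemma eventually_one_lt_of_tendsto_log_div {x N : ℕ → ℝ} {a : ℕ → ℕ}
    (hN : ∀ n, N n = ∑ j ∈ Icc 1 (a n), x n ^ j)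
    (hx : ∀ n, 0 ≤ x n) (hL : Tendsto (fun n => log (N n / a n)) atTop atTop) :
    ∀ᶠ n in atTop, 1 < x n := by
  filter_upwards [hL.eventually_gt_atTop 0] with n hn
  rw [hN] at hn
  exact one_lt_of_log_sum_Icc_pow_div_pos (hx n) hn

lemma eventually_one_le_of_tendsto_log_div {N : ℕ → ℝ} {a : ℕ → ℕ}
    (hL : Tendsto (fun n => log (N n / a n)) atTop atTop) : ∀ᶠ n in atTop, 1 ≤ a n := by
  filter_upwards [hL.eventually_gt_atTop 0] with n hn
  rcases Nat.eq_zero_or_pos (a n) with h | h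
  · simp [h] at hn
  · exact h

lemma tendsto_mul_log_atTop {x N : ℕ → ℝ} {a : ℕ → ℕ}
    (hN : ∀ n, N n = ∑ j ∈ Icc 1 (a n), x n ^ j) (hx : ∀ᶠ n in atTop, 1 < x n)
    (hL : Tendsto (fun n => log (N n / a n)) atTop atTop) :
    Tendsto (fun n => a n * log (x n)) atTop atTop := by
  refine tendsto_atTop_mono' atTop ?_ hL
  filter_upwards [hx, eventually_one_le_of_tendsto_log_div hL] with n hxn han
  rw [hN]
  exact log_sum_Icc_pow_div_le hxn.le han

lemma tendsto_mul_log_div_log {x N : ℕ → ℝ} {a : ℕ → ℕ}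
    (hN : ∀ n, N n = ∑ j ∈ Icc 1 (a n), x n ^ j) (hx : ∀ᶠ n in atTop, 1 < x n)
    (hL : Tendsto (fun n => log (N n / a n)) atTop atTop) :
    Tendsto (fun n => a n * log (x n) / log (N n / a n)) atTop (𝓝 1) := by
  have hu := tendsto_mul_log_atTop hN hx hL
  have hlow := tendsto_const_nhds (x := (1 : ℝ)).sub (tendsto_log_one_add_div_atTop.comp hu)
  rw [sub_zero] at hlow
  have hinv : Tendsto (fun n => log (N n / a n) / (a n * log (x n))) atTop (𝓝 1) := by
    refine tendsto_of_tendsto_of_tendsto_of_le_of_le' hlow tendsto_const_nhds ?_ ?_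
    · filter_upwards [hx, eventually_one_le_of_tendsto_log_div hL, hu.eventually_gt_atTop 0]
        with n hxn han hun
      have := mul_log_le_log_sum_Icc_pow_div_add hxn han
      rw [← hN] at this
      rw [Function.comp_apply, le_div_iff₀ hun, sub_mul, div_mul_cancel₀ _ hun.ne']
      linarith
    · filter_upwards [hx, eventually_one_le_of_tendsto_log_div hL, hu.eventually_gt_atTop 0]
        with n hxn han hun
      have := log_sum_Icc_pow_div_le hxn.le han
      rw [← hN] at this
      rwa [div_le_one hun]
  simpa using hinv.inv₀ one_ne_zero

lemma tendsto_log_nhds_zero {x N : ℕ → ℝ} {a : ℕ → ℕ}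
    (hN : ∀ n, N n = ∑ j ∈ Icc 1 (a n), x n ^ j) (hx : ∀ᶠ n in atTop, 1 < x n)
    (ha : ∀ᶠ n in atTop, 1 ≤ a n) (hNa : Tendsto (fun n => log (N n) / a n) atTop (𝓝 0)) :
    Tendsto (fun n => log (x n)) atTop (𝓝 0) := by
  refine tendsto_of_tendsto_of_tendsto_of_le_of_le' tendsto_const_nhds hNa ?_ ?_
  · filter_upwards [hx] with n hxn using (log_pos hxn).le
  · filter_upwards [hx, ha] with n hxn han
    have han' : (0 : ℝ) < a n := by exact_mod_cast han
    rw [le_div_iff₀ han', mul_comm, hN]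
    exact mul_log_le_log_sum_Icc_pow (by linarith) han

lemma tendsto_natCast_alpha_atTop {a₁ : ℝ} {α : ℕ → ℕ} (ha₁ : 0 < a₁)
    (hα : ∀ n : ℕ, (n : ℝ) ^ a₁ ≤ α n) : Tendsto (fun n => (α n : ℝ)) atTop atTop :=
  tendsto_atTop_mono hα ((tendsto_rpow_atTop ha₁).comp tendsto_natCast_atTop_atTop)

lemma tendsto_log_div_alpha_nhds_zero {a₁ : ℝ} {α : ℕ → ℕ} (ha₁ : 0 < a₁)
    (hα : ∀ n : ℕ, (n : ℝ) ^ a₁ ≤ α n) :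
    Tendsto (fun n : ℕ => log n / α n) atTop (𝓝 0) := by
  refine tendsto_of_tendsto_of_tendsto_of_le_of_le' tendsto_const_nhds
    ((isLittleO_log_rpow_atTop ha₁).tendsto_div_nhds_zero.comp tendsto_natCast_atTop_atTop)
    (Eventually.of_forall fun n => by positivity) ?_
  filter_upwards [eventually_gt_atTop 0] with n hn
  exact div_le_div_of_nonneg_left (log_natCast_nonneg n) (by positivity) (hα n)

lemma tendsto_log_div_alpha_atTop {a₂ : ℝ} {α : ℕ → ℕ} (ha₂ : a₂ < 1)
    (hα0 : ∀ᶠ n in atTop, (0 : ℝ) < α n) (hα : ∀ n : ℕ, (α n : ℝ) ≤ n ^ a₂) :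
    Tendsto (fun n => log (n / α n)) atTop atTop := by
  refine tendsto_log_atTop.comp (tendsto_atTop_mono' atTop ?_
    ((tendsto_rpow_atTop (sub_pos.mpr ha₂)).comp tendsto_natCast_atTop_atTop))
  filter_upwards [hα0, eventually_gt_atTop 0] with n hαn hn
  have hn' : (0 : ℝ) < n := by exact_mod_cast hn
  rw [Function.comp_apply, rpow_sub hn', rpow_one]
  exact div_le_div_of_nonneg_left hn'.le hαn (hα n)

lemma tendsto_alpha_mul_one_add_log_div {a₂ : ℝ} {α : ℕ → ℕ} (ha₂ : a₂ < 1)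
    (hα : ∀ n : ℕ, (α n : ℝ) ≤ n ^ a₂) :
    Tendsto (fun n : ℕ => α n * (1 + log n) / n) atTop (𝓝 0) := by
  have hε : 0 < 1 - a₂ := sub_pos.mpr ha₂
  have hup := ((tendsto_const_nhds (x := (1 : ℝ))).div_atTop (tendsto_rpow_atTop hε)).add
    (isLittleO_log_rpow_atTop hε).tendsto_div_nhds_zero
  rw [add_zero] at hup
  refine tendsto_of_tendsto_of_tendsto_of_le_of_le' tendsto_const_nhds
    (hup.comp tendsto_natCast_atTop_atTop) ?_ ?_
  · filter_upwards [eventually_gt_atTop 0] with n hn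
    have : 0 ≤ log n := log_natCast_nonneg n
    positivity
  · filter_upwards [eventually_gt_atTop 0] with n hn
    have hn' : (0 : ℝ) < n := by exact_mod_cast hn
    have : 0 ≤ log n := log_natCast_nonneg n
    calc α n * (1 + log n) / n ≤ n ^ a₂ * (1 + log n) / n := by gcongr; exact hα n
      _ = (1 / n ^ (1 - a₂) + log n / n ^ (1 - a₂)) := by
          rw [rpow_sub hn', rpow_one]; field_simp

lemma toNat_add_floor_bounds {a : ℕ} {y : ℝ} (hy : -(a : ℝ) ≤ y) :
    (a : ℝ) + y - 1 < ((a : ℤ) + ⌊y⌋).toNat ∧ (((a : ℤ) + ⌊y⌋).toNat : ℝ) ≤ a + y := by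
  have h0 : 0 ≤ (a : ℤ) + ⌊y⌋ := by
    have : -(a : ℤ) ≤ ⌊y⌋ := Int.le_floor.mpr (by exact_mod_cast hy)
    omega
  have hcast : (((a : ℤ) + ⌊y⌋).toNat : ℝ) = a + ⌊y⌋ := by
    exact_mod_cast congrArg (Int.cast (R := ℝ)) (Int.toNat_of_nonneg h0)
  rw [hcast]
  constructor
  · linarith [Int.lt_floor_add_one y]
  · linarith [Int.floor_le y]

lemma eventually_natCast_sub_bt_bounds {α : ℕ → ℕ} {t : ℝ} (ht : 0 < t)
    (hL : Tendsto (fun n => log (n / α n)) atTop atTop) :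
    ∀ᶠ n in atTop, -(log t * α n / log (n / α n)) ≤ α n - bt α n t ∧
      (α n : ℝ) - bt α n t < 1 - log t * α n / log (n / α n) := by
  filter_upwards [hL.eventually_gt_atTop 0, hL.eventually_ge_atTop (-log t)] with n hL0 hLt
  have hy : -(α n : ℝ) ≤ log t * α n / log (n / α n) := by
    rw [le_div_iff₀ hL0]
    nlinarith [(Nat.cast_nonneg (α n) : (0 : ℝ) ≤ α n)]
  obtain ⟨h1, h2⟩ := toNat_add_floor_bounds hy
  rw [bt, if_neg ht.ne']
  constructor <;> linarith

lemma eventually_bt_le {α : ℕ → ℕ} {t : ℝ} (ht : 0 < t) (ht1 : t ≤ 1)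
    (hL : Tendsto (fun n => log (n / α n)) atTop atTop) : ∀ᶠ n in atTop, bt α n t ≤ α n := by
  filter_upwards [hL.eventually_gt_atTop 0, eventually_natCast_sub_bt_bounds ht hL]
    with n hL0 hb
  have hy : log t * α n / log (n / α n) ≤ 0 :=
    div_nonpos_of_nonpos_of_nonneg (mul_nonpos_of_nonpos_of_nonneg (log_nonpos ht.le ht1)
      (Nat.cast_nonneg _)) hL0.le
  exact_mod_cast (by linarith [hb.1] : (bt α n t : ℝ) ≤ α n)

/- `α n - b_t(n) = -log t · α n / log (n / α n) + O(1)`, and `α n · log x ~ log (n / α n)`. -/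
lemma tendsto_natCast_sub_bt_mul_log {α : ℕ → ℕ} {x : ℕ → ℝ} {t : ℝ} (ht : 0 < t)
    (hx : ∀ᶠ n in atTop, 1 < x n) (hL : Tendsto (fun n => log (n / α n)) atTop atTop)
    (huL : Tendsto (fun n => α n * log (x n) / log (n / α n)) atTop (𝓝 1))
    (hℓ : Tendsto (fun n => log (x n)) atTop (𝓝 0)) :
    Tendsto (fun n => ((α n : ℝ) - bt α n t) * log (x n)) atTop (𝓝 (-log t)) := by
  have hlow := huL.const_mul (-log t)
  have hup := hℓ.add hlow
  rw [mul_one] at hlow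
  rw [mul_one, zero_add] at hup
  have hb := (eventually_natCast_sub_bt_bounds ht hL).and hx
  refine tendsto_of_tendsto_of_tendsto_of_le_of_le' hlow hup ?_ ?_
  · filter_upwards [hb] with n ⟨⟨hb₁, _⟩, hxn⟩
    calc -log t * (α n * log (x n) / log (n / α n))
        = -(log t * α n / log (n / α n)) * log (x n) := by ring
      _ ≤ _ := mul_le_mul_of_nonneg_right hb₁ (log_pos hxn).le
  · filter_upwards [hb] with n ⟨⟨_, hb₂⟩, hxn⟩
    calc ((α n : ℝ) - bt α n t) * log (x n)
        ≤ (1 - log t * α n / log (n / α n)) * log (x n) :=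
          mul_le_mul_of_nonneg_right hb₂.le (log_pos hxn).le
      _ = _ := by ring

lemma tendsto_bt_div {α : ℕ → ℕ} {t : ℝ} (ht : 0 < t)
    (hL : Tendsto (fun n => log (n / α n)) atTop atTop)
    (hA : Tendsto (fun n => (α n : ℝ)) atTop atTop) :
    Tendsto (fun n => (bt α n t : ℝ) / α n) atTop (𝓝 1) := by
  have hc : Tendsto (fun n => -log t / log (n / α n)) atTop (𝓝 0) :=
    tendsto_const_nhds.div_atTop hL
  have hup := hc.add (tendsto_inv_atTop_zero.comp hA)
  rw [add_zero] at hup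
  have hb := (eventually_natCast_sub_bt_bounds ht hL).and (hA.eventually_gt_atTop 0)
  have hk : Tendsto (fun n => ((α n : ℝ) - bt α n t) / α n) atTop (𝓝 0) := by
    refine tendsto_of_tendsto_of_tendsto_of_le_of_le' hc hup ?_ ?_
    · filter_upwards [hb] with n ⟨⟨hb₁, _⟩, hA0⟩
      rw [le_div_iff₀ hA0]
      calc -log t / log (n / α n) * α n = -(log t * α n / log (n / α n)) := by ring
        _ ≤ _ := hb₁
    · filter_upwards [hb] with n ⟨⟨_, hb₂⟩, hA0⟩
      rw [div_le_iff₀ hA0]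
      calc ((α n : ℝ) - bt α n t) ≤ 1 - log t * α n / log (n / α n) := hb₂.le
        _ = _ := by simp only [Function.comp_apply]; field_simp; ring
  have := (tendsto_const_nhds (x := (1 : ℝ))).sub hk
  rw [sub_zero] at this
  refine this.congr' ?_
  filter_upwards [hA.eventually_gt_atTop 0] with n hA0
  field_simp
  ring

theorem partial_sums_asymptotics_general
    (a₁ a₂ : ℝ) (ha₁ : 0 < a₁) (ha₂ : a₂ < 1)
    (α : ℕ → ℕ) (hα : ∀ n : ℕ, (n : ℝ) ^ a₁ ≤ (α n : ℝ) ∧ (α n : ℝ) ≤ (n : ℝ) ^ a₂)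
    (x : ℕ → ℝ) (hx_pos : ∀ n, 0 < x n)
    (hx_eq : ∀ n : ℕ, (n : ℝ) = ∑ j ∈ Finset.Icc 1 (α n), x n ^ j)
    (t : ℝ) (ht : 0 < t) (ht1 : t ≤ 1) :
    Tendsto
      (fun n : ℕ => (∑ j ∈ Finset.Icc 1 (bt α n t), x n ^ j) / (t * (n : ℝ)))
      atTop (nhds 1) ∧
    Tendsto
      (fun n : ℕ => (∑ j ∈ Finset.Icc 1 (bt α n t), x n ^ j / (j : ℝ)) /
        (t * (n : ℝ) / (α n : ℝ)))
      atTop (nhds 1) := by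
  have hA := tendsto_natCast_alpha_atTop ha₁ fun n => (hα n).1
  have hL := tendsto_log_div_alpha_atTop ha₂ (hA.eventually_gt_atTop 0) fun n => (hα n).2
  have hx := eventually_one_lt_of_tendsto_log_div hx_eq (fun n => (hx_pos n).le) hL
  have hu := tendsto_mul_log_atTop hx_eq hx hL
  have hℓ := tendsto_log_nhds_zero hx_eq hx (eventually_one_le_of_tendsto_log_div hL)
    (tendsto_log_div_alpha_nhds_zero ha₁ fun n => (hα n).1)
  have h₁ := tendsto_sum_Icc_pow_div hx_eq hx hu
    (tendsto_natCast_sub_bt_mul_log ht hx hL (tendsto_mul_log_div_log hx_eq hx hL) hℓ)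
  rw [neg_neg, exp_log ht] at h₁
  have h₂ := tendsto_sum_Icc_pow_div_mul_div hx_eq hx (eventually_bt_le ht ht1 hL) h₁
    (tendsto_bt_div ht hL hA) hA hu hℓ (tendsto_alpha_mul_one_add_log_div ha₂ fun n => (hα n).2)
  rw [← div_self ht.ne']
  constructor
  · exact (h₁.div_const t).congr fun n => by rw [div_div, mul_comm]
  · exact (h₂.div_const t).congr fun n => by field_simp

/-- for fixed `0 < t ≤ 1`,
`Σ_{j=1}^{b_t(n)} x_{n,α}^j ∼ t·n` and `Σ_{j=1}^{b_t(n)} x_{n,α}^j/j ∼ t·n/α(n)`. -/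
theorem partial_sums_asymptotics
    (a₁ a₂ : ℝ) (ha₁ : 0 < a₁) (ha₁₂ : a₁ ≤ a₂) (ha₂ : a₂ < 1)
    (α : ℕ → ℕ) (hα : ∀ n : ℕ, (n : ℝ) ^ a₁ ≤ (α n : ℝ) ∧ (α n : ℝ) ≤ (n : ℝ) ^ a₂)
    (x : ℕ → ℝ) (hx_pos : ∀ n, 0 < x n)
    (hx_eq : ∀ n : ℕ, (n : ℝ) = ∑ j ∈ Finset.Icc 1 (α n), x n ^ j)
    (t : ℝ) (ht : 0 < t) (ht1 : t ≤ 1) :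
    Tendsto
      (fun n : ℕ => (∑ j ∈ Finset.Icc 1 (bt α n t), x n ^ j) / (t * (n : ℝ)))
      atTop (nhds 1) ∧
    Tendsto
      (fun n : ℕ => (∑ j ∈ Finset.Icc 1 (bt α n t), x n ^ j / (j : ℝ)) /
        (t * (n : ℝ) / (α n : ℝ)))
      atTop (nhds 1) :=
  partial_sums_asymptotics_general a₁ a₂ ha₁ ha₂ α hα x hx_pos hx_eq t ht ht1
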